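/- arXiv:2211.01250 — 8 statements merged into one kernel-verified Lean document; each statement's English description precedes it below -/
import Mathlib

section
/- Let 0 < Ω < χ and let M be the Jacobi matrix of the TaT flow at the saddle (1,0,0), i.e. the matrix with rows (0,0,0), (0,0,χ−Ω), (0,Ω,0). Then the vectors v± = (0, ±√(χ−Ω), √Ω) are eigenvectors of M with eigenvalues ±√(Ω(χ−Ω)) respectively, and the cosine of the angle between v₊ and v₋ equals 2Ω/χ − 1. In particular, the stable and unstable separatrix branches at the saddle are orthogonal if and only if χ = 2Ω (critical coupling). -/
open Matrix

/-- The vectors `v± = (0, ±√(χ−Ω), √Ω)` are eigenvectors of the TaT saddle Jacobi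
matrix with eigenvalues `±√(Ω(χ−Ω))`, the cosine of the angle between them equals
`2Ω/χ − 1`, and they are orthogonal iff `χ = 2Ω` (critical coupling). -/
theorem TaT_separatrix_branches (χ Ω : ℝ) (hΩ : 0 < Ω) (hΩχ : Ω < χ)
    (M : Matrix (Fin 3) (Fin 3) ℝ)
    (hM : M = !![0, 0, 0; 0, 0, χ - Ω; 0, Ω, 0])
    (vp vm : Fin 3 → ℝ)
    (hvp : vp = ![0, Real.sqrt (χ - Ω), Real.sqrt Ω])
    (hvm : vm = ![0, -Real.sqrt (χ - Ω), Real.sqrt Ω]) :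
    M.mulVec vp = Real.sqrt (Ω * (χ - Ω)) • vp ∧
    M.mulVec vm = (-Real.sqrt (Ω * (χ - Ω))) • vm ∧
    (vp ⬝ᵥ vm) / (Real.sqrt (vp ⬝ᵥ vp) * Real.sqrt (vm ⬝ᵥ vm)) = 2 * Ω / χ - 1 ∧
    (vp ⬝ᵥ vm = 0 ↔ χ = 2 * Ω) := by
  subst hM hvp hvm
  have hd : (0:ℝ) < χ - Ω := by linarith
  have hχ : (0:ℝ) < χ := by linarith
  have hs : Real.sqrt (Ω * (χ - Ω)) = Real.sqrt Ω * Real.sqrt (χ - Ω) :=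
    Real.sqrt_mul hΩ.le _
  have h1 : Real.sqrt Ω ^ 2 = Ω := Real.sq_sqrt hΩ.le
  have h2 : Real.sqrt (χ - Ω) ^ 2 = χ - Ω := Real.sq_sqrt hd.le
  refine ⟨?_, ?_, ?_, ?_⟩
  · funext i
    fin_cases i <;>
      simp [Matrix.mulVec, dotProduct, Fin.sum_univ_three, hs] <;>
      first
        | linear_combination Real.sqrt Ω * h2
        | linear_combination Real.sqrt (χ - Ω) * h1
        | linear_combination (-Real.sqrt Ω) * h2
        | linear_combination (-Real.sqrt (χ - Ω)) * h1
  · funext i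
    fin_cases i <;>
      simp [Matrix.mulVec, dotProduct, Fin.sum_univ_three, hs] <;>
      first
        | linear_combination Real.sqrt Ω * h2
        | linear_combination Real.sqrt (χ - Ω) * h1
        | linear_combination (-Real.sqrt Ω) * h2
        | linear_combination (-Real.sqrt (χ - Ω)) * h1
  · have hdp : (![0, Real.sqrt (χ - Ω), Real.sqrt Ω] ⬝ᵥ ![0, -Real.sqrt (χ - Ω), Real.sqrt Ω] : ℝ)
        = 2 * Ω - χ := by
      simp [dotProduct, Fin.sum_univ_three]; nlinarith [h1, h2]
    have hnp : (![0, Real.sqrt (χ - Ω), Real.sqrt Ω] ⬝ᵥ ![0, Real.sqrt (χ - Ω), Real.sqrt Ω] : ℝ)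
        = χ := by
      simp [dotProduct, Fin.sum_univ_three]; nlinarith [h1, h2]
    have hnm : (![0, -Real.sqrt (χ - Ω), Real.sqrt Ω] ⬝ᵥ ![0, -Real.sqrt (χ - Ω), Real.sqrt Ω] : ℝ)
        = χ := by
      simp [dotProduct, Fin.sum_univ_three]; nlinarith [h1, h2]
    rw [hdp, hnp, hnm, Real.mul_self_sqrt hχ.le]
    field_simp
  · have hdp : (![0, Real.sqrt (χ - Ω), Real.sqrt Ω] ⬝ᵥ ![0, -Real.sqrt (χ - Ω), Real.sqrt Ω] : ℝ)
        = 2 * Ω - χ := by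
      simp [dotProduct, Fin.sum_univ_three]; nlinarith [h1, h2]
    rw [hdp]; constructor <;> intro h <;> linarith
end

section
/- For all real numbers 0 < z₀ ≤ z_f < 1, ∫_{z₀}^{z_f} dz / (z√(1−z²)) = log[ z_f (1 + √(1 − z₀²)) / ( z₀ (1 + √(1 − z_f²)) ) ]. In particular, for real N > 1/2 and z₀ = 1/√(2N), twice this integral equals 2 log[ z_f (√(2N) + √(2N−1)) / (1 + √(1 − z_f²)) ], which is the traveling time χ·t along the TaT separatrix at critical coupling from the edge of the spin-coherent-state uncertainty patch Z(0) = 1/√(2N) to Z(t_f) = z_f; taking z_f = 1 gives the time to the first peak of the quantum Fisher information, χ·t = 2 log(√(2N) + √(2N−1)). -/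
/-!
`z ↦ log z - log (1 + √(1 - z²))` is an antiderivative of `1 / (z √(1 - z²))` on `(0, 1)`
(it is `-artanh √(1 - z²)`), so the integral follows from the fundamental theorem of calculus.
For `z₀ = 1/√(2N)` one has `√(1 - z₀²) = √(2N - 1)/√(2N)`, and the factor `1/z₀ = √(2N)`
clears that denominator.
-/

open Real Set

lemma hasDerivAt_log_sub_log_one_add_sqrt_one_sub_sq {z : ℝ} (hz₀ : 0 < z) (hz₁ : z < 1) :
    HasDerivAt (fun z : ℝ => log z - log (1 + √(1 - z ^ 2))) (1 / (z * √(1 - z ^ 2))) z := by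
  have hpos : 0 < 1 - z ^ 2 := by nlinarith
  set s := √(1 - z ^ 2) with hs
  have hs_pos : 0 < s := sqrt_pos.mpr hpos
  have hs_sq : s ^ 2 = 1 - z ^ 2 := sq_sqrt hpos.le
  have hsqrt : HasDerivAt (fun z : ℝ => √(1 - z ^ 2)) (-(2 * z) / (2 * s)) z := by
    have hinner : HasDerivAt (fun z : ℝ => 1 - z ^ 2) (-(2 * z)) z := by
      simpa using (hasDerivAt_pow 2 z).const_sub 1
    exact (hinner.sqrt hpos.ne').congr_deriv (by ring)
  have hlog := (hasDerivAt_log hz₀.ne').sub ((hsqrt.const_add 1).log (by positivity))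
  refine hlog.congr_deriv ?_
  field_simp
  nlinarith [mul_pos hz₀ hs_pos]

lemma integral_one_div_mul_sqrt_one_sub_sq {a b : ℝ} (ha₀ : 0 < a) (ha₁ : a < 1)
    (hb₀ : 0 < b) (hb₁ : b < 1) :
    ∫ z in a..b, 1 / (z * √(1 - z ^ 2)) =
      log (b * (1 + √(1 - a ^ 2)) / (a * (1 + √(1 - b ^ 2)))) := by
  have hmem : ∀ z ∈ uIcc a b, 0 < z ∧ z < 1 := fun z hz =>
    ⟨lt_of_lt_of_le (lt_min ha₀ hb₀) hz.1, lt_of_le_of_lt hz.2 (max_lt ha₁ hb₁)⟩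
  have hcont : ContinuousOn (fun z : ℝ => 1 / (z * √(1 - z ^ 2))) (uIcc a b) := by
    refine continuousOn_const.div (by fun_prop) fun z hz => ?_
    obtain ⟨hz₀, hz₁⟩ := hmem z hz
    exact mul_ne_zero hz₀.ne' (sqrt_pos.mpr (by nlinarith)).ne'
  rw [intervalIntegral.integral_eq_sub_of_hasDerivAt
    (fun z hz => hasDerivAt_log_sub_log_one_add_sqrt_one_sub_sq (hmem z hz).1 (hmem z hz).2)
    hcont.intervalIntegrable]
  have hA : 0 < 1 + √(1 - a ^ 2) := by positivity
  have hB : 0 < 1 + √(1 - b ^ 2) := by positivity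
  rw [log_div (by positivity) (by positivity), log_mul hb₀.ne' hA.ne', log_mul ha₀.ne' hB.ne']
  ring

lemma sqrt_one_sub_one_div_sqrt_sq {x : ℝ} (hx : 0 < x) :
    √(1 - (1 / √x) ^ 2) = √(x - 1) / √x := by
  rw [div_pow, one_pow, sq_sqrt hx.le, ← sqrt_div' _ hx.le, one_sub_div hx.ne']

/-- Traveling time along the TaT separatrix at critical coupling:
`∫_{z₀}^{z_f} dz/(z√(1−z²)) = log[z_f(1+√(1−z₀²))/(z₀(1+√(1−z_f²)))]` for
`0 < z₀ ≤ z_f < 1`; in particular for `z₀ = 1/√(2N)` twice this integral equals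
`2 log[z_f(√(2N)+√(2N−1))/(1+√(1−z_f²))]`. -/
theorem TaT_travel_time :
    (∀ z₀ zf : ℝ, 0 < z₀ → z₀ ≤ zf → zf < 1 →
      ∫ z in z₀..zf, 1 / (z * Real.sqrt (1 - z ^ 2)) =
        Real.log (zf * (1 + Real.sqrt (1 - z₀ ^ 2)) /
          (z₀ * (1 + Real.sqrt (1 - zf ^ 2))))) ∧
    (∀ N zf : ℝ, 1 / 2 < N → 1 / Real.sqrt (2 * N) ≤ zf → zf < 1 →
      2 * ∫ z in (1 / Real.sqrt (2 * N))..zf, 1 / (z * Real.sqrt (1 - z ^ 2)) =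
        2 * Real.log (zf * (Real.sqrt (2 * N) + Real.sqrt (2 * N - 1)) /
          (1 + Real.sqrt (1 - zf ^ 2)))) := by
  refine ⟨fun z₀ zf h₀ hle h₁ =>
    integral_one_div_mul_sqrt_one_sub_sq h₀ (hle.trans_lt h₁) (h₀.trans_le hle) h₁, ?_⟩
  intro N zf hN hle h₁
  have hq : 0 < √(2 * N) := sqrt_pos.mpr (by linarith)
  have h₀ : 0 < 1 / √(2 * N) := by positivity
  rw [integral_one_div_mul_sqrt_one_sub_sq h₀ (hle.trans_lt h₁) (h₀.trans_le hle) h₁,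
    sqrt_one_sub_one_div_sqrt_sq (by linarith)]
  congr 2
  field_simp
end

section
/- Let Ω and χ be real numbers, let G be the 2×2 real diagonal matrix diag(−Ω, χ−Ω) and J the 2×2 matrix with rows (0,1) and (−1,0). Then (1/8)(Tr(G²) + Tr((GJ)²)) = χ²/8; i.e., the quantum speed V₀² of the initial (unsqueezed vacuum) Gaussian state under the Holstein–Primakoff TaT Hamiltonian equals χ²/8 independently of Ω. Moreover, for every r > 0 the ratio V₀²/V²_max(r) = u² / (u² + 2u|u − 2| r), as a function of u = χ/Ω > 0, satisfies u²/(u² + 2u|u−2|r) ≤ 1 with equality if and only if u = 2; hence the quantum speed limit is saturated exactly at critical coupling χ = 2Ω, for every value of the squeezing r. -/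
/-- With `G = diag(−Ω, χ−Ω)` and the symplectic form `J`, the quantum speed of the
unsqueezed Gaussian state is `(1/8)(Tr(G²) + Tr((GJ)²)) = χ²/8`, independent of `Ω`;
and for every squeezing `r > 0` the ratio `u²/(u² + 2u|u−2|r)` (with `u = χ/Ω > 0`)
is at most `1`, with equality iff `u = 2`: the quantum speed limit is saturated
exactly at critical coupling `χ = 2Ω`. -/
theorem TaT_quantum_speed_limit (χ Ω : ℝ)
    (G : Matrix (Fin 2) (Fin 2) ℝ) (hG : G = !![-Ω, 0; 0, χ - Ω])
    (J : Matrix (Fin 2) (Fin 2) ℝ) (hJ : J = !![0, 1; -1, 0]) :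
    (1 / 8) * (Matrix.trace (G * G) + Matrix.trace ((G * J) * (G * J))) = χ ^ 2 / 8 ∧
    ∀ r : ℝ, 0 < r → ∀ u : ℝ, 0 < u →
      u ^ 2 / (u ^ 2 + 2 * u * |u - 2| * r) ≤ 1 ∧
      (u ^ 2 / (u ^ 2 + 2 * u * |u - 2| * r) = 1 ↔ u = 2) := by
  constructor
  · subst hG hJ
    simp [Matrix.trace_fin_two, Matrix.mul_fin_two]
    ring
  · intro r hr u hu
    have habs : 0 ≤ |u - 2| := abs_nonneg _
    have hden : 0 < u ^ 2 + 2 * u * |u - 2| * r := by positivity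
    have hx : 0 ≤ 2 * u * |u - 2| * r := by positivity
    have hnum : u ^ 2 ≤ u ^ 2 + 2 * u * |u - 2| * r := by linarith
    constructor
    · exact div_le_one_of_le₀ hnum (le_of_lt hden)
    · rw [div_eq_one_iff_eq (ne_of_gt hden)]
      constructor
      · intro h
        have h2 : 2 * u * |u - 2| * r = 0 := by linarith
        have : |u - 2| = 0 := by
          rcases mul_eq_zero.mp h2 with h3 | h3
          · rcases mul_eq_zero.mp h3 with h4 | h4
            · rcases mul_eq_zero.mp h4 with h5 | h5 <;> [norm_num at h5; linarith]
            · exact h4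
          · linarith
        have := abs_eq_zero.mp this; linarith
      · intro h; simp [h]
end

section
/- Let p ≥ 2 be an even integer, let χ be a nonzero real number, and let F_pCT(X,Y,Z) = χ(−Y^{p−1}Z, −X^{p−1}Z, X^{p−1}Y + XY^{p−1}) be the mean-field flow of the p-order two-axis counter-twisting Hamiltonian. A point (X,Y,Z) on the unit sphere X²+Y²+Z² = 1 satisfies F_pCT(X,Y,Z) = 0 if and only if it is one of the six points (0,0,±1), (±1,0,0), (0,±1,0); in particular the set of fixed points is independent of p. -/
/-- Fixed points of the `p`-order two-axis counter-twisting mean-field flow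
`F_pCT(X,Y,Z) = χ(−Y^{p−1}Z, −X^{p−1}Z, X^{p−1}Y + XY^{p−1})` (`p` even, `p ≥ 2`)
on the unit sphere are exactly the six points `(0,0,±1)`, `(±1,0,0)`, `(0,±1,0)`;
in particular the set of fixed points is independent of `p`. -/
theorem pCT_fixed_points (p : ℕ) (hp : 2 ≤ p) (hpe : Even p) (χ : ℝ) (hχ : χ ≠ 0)
    (X Y Z : ℝ) (hsph : X ^ 2 + Y ^ 2 + Z ^ 2 = 1) :
    (χ * (-(Y ^ (p - 1) * Z)) = 0 ∧ χ * (-(X ^ (p - 1) * Z)) = 0 ∧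
      χ * (X ^ (p - 1) * Y + X * Y ^ (p - 1)) = 0) ↔
    ((X, Y, Z) = ((0 : ℝ), (0 : ℝ), (1 : ℝ)) ∨ (X, Y, Z) = (0, 0, -1) ∨
     (X, Y, Z) = (1, 0, 0) ∨ (X, Y, Z) = (-1, 0, 0) ∨
     (X, Y, Z) = (0, 1, 0) ∨ (X, Y, Z) = (0, -1, 0)) := by
  obtain ⟨n, rfl⟩ : ∃ n, p = n + 2 := ⟨p - 2, by omega⟩
  have hn : Even n := by
    rcases hpe with ⟨k, hk⟩
    exact ⟨k - 1, by omega⟩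
  have hsub : n + 2 - 1 = n + 1 := by omega
  rw [hsub]
  constructor
  · rintro ⟨h1, h2, h3⟩
    have h1' : Y ^ (n + 1) * Z = 0 := by
      rcases mul_eq_zero.1 h1 with h | h
      · exact absurd h hχ
      · linarith [neg_eq_zero.1 h]
    have h2' : X ^ (n + 1) * Z = 0 := by
      rcases mul_eq_zero.1 h2 with h | h
      · exact absurd h hχ
      · linarith [neg_eq_zero.1 h]
    have h3' : X ^ (n + 1) * Y + X * Y ^ (n + 1) = 0 := by
      rcases mul_eq_zero.1 h3 with h | h
      · exact absurd h hχ
      · exact h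
    by_cases hZ : Z = 0
    · subst hZ
      by_cases hX : X = 0
      · subst hX
        have hY2 : (Y - 1) * (Y + 1) = 0 := by nlinarith
        rcases mul_eq_zero.1 hY2 with h | h
        · exact Or.inr (Or.inr (Or.inr (Or.inr (Or.inl (by simp [show Y = 1 by linarith])))))
        · exact Or.inr (Or.inr (Or.inr (Or.inr (Or.inr (by simp [show Y = -1 by linarith])))))
      · by_cases hY : Y = 0
        · subst hY
          have hX2 : (X - 1) * (X + 1) = 0 := by nlinarith
          rcases mul_eq_zero.1 hX2 with h | h
          · exact Or.inr (Or.inr (Or.inl (by simp [show X = 1 by linarith])))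
          · exact Or.inr (Or.inr (Or.inr (Or.inl (by simp [show X = -1 by linarith]))))
        · exfalso
          have hfac : X * Y * (X ^ n + Y ^ n) = 0 := by
            rw [← h3']; ring
          have hXn : 0 < X ^ n := hn.pow_pos hX
          have hYn : 0 < Y ^ n := hn.pow_pos hY
          rcases mul_eq_zero.1 hfac with h | h
          · rcases mul_eq_zero.1 h with h | h
            · exact hX h
            · exact hY h
          · linarith
    · have hY : Y = 0 := by
        have := (mul_eq_zero.1 h1').resolve_right hZ
        exact pow_eq_zero_iff (Nat.succ_ne_zero n) |>.1 this
      have hX : X = 0 := by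
        have := (mul_eq_zero.1 h2').resolve_right hZ
        exact pow_eq_zero_iff (Nat.succ_ne_zero n) |>.1 this
      subst hX; subst hY
      have hZ2 : (Z - 1) * (Z + 1) = 0 := by nlinarith
      rcases mul_eq_zero.1 hZ2 with h | h
      · exact Or.inl (by simp [show Z = 1 by linarith])
      · exact Or.inr (Or.inl (by simp [show Z = -1 by linarith]))
  · intro h
    rcases h with h | h | h | h | h | h <;>
      · simp only [Prod.mk.injEq] at h
        obtain ⟨hX, hY, hZ⟩ := h
        subst hX; subst hY; subst hZ
        norm_num [zero_pow (Nat.succ_ne_zero n)]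
end

section
/- (No-go theorem for local optimality of pTaT, p > 2.) Let p ≥ 3 be an integer, χ > 0, Ω > 0, and let (X, 0, Z) be a point on the unit sphere with Z ≠ 0 satisfying the saddle fixed-point condition χXZ^{p−2} = Ω for the pTaT flow F_pTaT(X,Y,Z) = (−χYZ^{p−1}, χXZ^{p−1} − ΩZ, ΩY). Then the total derivative (Jacobi matrix) of F_pTaT at (X,0,Z) equals the matrix M with rows (0, −χZ^{p−1}, 0), (χZ^{p−1}, 0, (p−2)Ω), (0, Ω, 0), and M is not a symmetric matrix (M ≠ Mᵀ). Consequently, in the sense of the paper — where local optimality of the dynamics at a saddle means that the Jacobi matrix there is real symmetric, so that the principal separatrix directions are orthogonal — there is no value of the control parameter Ω/χ > 0 for which pTaT dynamics with p > 2 is locally optimal. -/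
open Matrix

/-! At a saddle `(X, 0, Z)` the saddle condition turns `∂_Z (χ X Z^{p-1}) = (p - 1) χ X Z^{p-2}`
into `(p - 1) Ω`, which together with `-Ω` gives the Jacobian entry `(p - 2) Ω`. Non-symmetry,
however, is already forced by the rotation block: the entries `∓χ Z^{p-1}` coupling `X` and `Y`
are opposite and non-zero. -/

def pTaTField (p : ℕ) (χ Ω : ℝ) : ℝ × ℝ × ℝ → ℝ × ℝ × ℝ := fun q =>
  (-(χ * q.2.1 * q.2.2 ^ (p - 1)), χ * q.1 * q.2.2 ^ (p - 1) - Ω * q.2.2, Ω * q.2.1)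

theorem fderiv_pTaTField_apply (p : ℕ) (χ Ω : ℝ) (q v : ℝ × ℝ × ℝ) :
    fderiv ℝ (pTaTField p χ Ω) q v =
      (-(χ * (q.2.2 ^ (p - 1) * v.2.1 + (p - 1 : ℕ) * q.2.1 * q.2.2 ^ (p - 2) * v.2.2)),
       χ * (q.2.2 ^ (p - 1) * v.1 + (p - 1 : ℕ) * q.1 * q.2.2 ^ (p - 2) * v.2.2) - Ω * v.2.2,
       Ω * v.2.1) := by
  have hX : HasFDerivAt (fun q : ℝ × ℝ × ℝ => q.1) (ContinuousLinearMap.fst ℝ ℝ (ℝ × ℝ)) q :=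
    hasFDerivAt_fst
  have hY : HasFDerivAt (fun q : ℝ × ℝ × ℝ => q.2.1)
      ((ContinuousLinearMap.fst ℝ ℝ ℝ).comp (ContinuousLinearMap.snd ℝ ℝ (ℝ × ℝ))) q :=
    hasFDerivAt_fst.comp _ hasFDerivAt_snd
  have hZ : HasFDerivAt (fun q : ℝ × ℝ × ℝ => q.2.2)
      ((ContinuousLinearMap.snd ℝ ℝ ℝ).comp (ContinuousLinearMap.snd ℝ ℝ (ℝ × ℝ))) q :=
    hasFDerivAt_snd.comp _ hasFDerivAt_snd
  have hZpow := hZ.pow (p - 1)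
  have hF : HasFDerivAt (pTaTField p χ Ω) _ q := ((hY.const_mul χ).mul hZpow).neg.prodMk
    ((((hX.const_mul χ).mul hZpow).sub (hZ.const_mul Ω)).prodMk (hY.const_mul Ω))
  rw [hF.fderiv, Nat.sub_sub]
  simp only [Nat.reduceAdd, nsmul_eq_mul, neg_add_rev, ContinuousLinearMap.prod_apply,
    _root_.add_apply, _root_.neg_apply, _root_.smul_apply, ContinuousLinearMap.comp_apply,
    ContinuousLinearMap.coe_snd', ContinuousLinearMap.coe_fst', smul_eq_mul, _root_.sub_apply, Prod.mk.injEq,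
    sub_left_inj, and_true]
  constructor <;> ring

theorem fderiv_pTaTField_apply_of_saddle {p : ℕ} (hp : 1 ≤ p) {χ Ω X Z : ℝ}
    (hsaddle : χ * X * Z ^ (p - 2) = Ω) (v : ℝ × ℝ × ℝ) :
    fderiv ℝ (pTaTField p χ Ω) (X, 0, Z) v =
      (-(χ * Z ^ (p - 1)) * v.2.1,
       χ * Z ^ (p - 1) * v.1 + ((p : ℝ) - 2) * Ω * v.2.2,
       Ω * v.2.1) := by
  rw [fderiv_pTaTField_apply, Nat.cast_sub hp]
  refine Prod.ext ?_ (Prod.ext ?_ rfl)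
  · simp only [mul_zero, zero_mul, add_zero, neg_mul, neg_inj]
    ring
  · linear_combination ((p : ℝ) - 1) * v.2.2 * hsaddle

theorem Matrix.ne_transpose_of_apply_ne {n α : Type*} {M : Matrix n n α} {i j : n}
    (h : M i j ≠ M j i) : M ≠ Mᵀ :=
  fun hM => h (congrFun (congrFun hM i) j)

theorem pTaT_no_local_optimality_general (p : ℕ) (hp : 3 ≤ p) (χ Ω : ℝ)
    (hχ : 0 < χ) (X Z : ℝ) (hZ : Z ≠ 0)
    (hsaddle : χ * X * Z ^ (p - 2) = Ω)
    (F : ℝ × ℝ × ℝ → ℝ × ℝ × ℝ)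
    (hF : F = fun q => (-(χ * q.2.1 * q.2.2 ^ (p - 1)),
      χ * q.1 * q.2.2 ^ (p - 1) - Ω * q.2.2, Ω * q.2.1))
    (M : Matrix (Fin 3) (Fin 3) ℝ)
    (hM : M = !![0, -(χ * Z ^ (p - 1)), 0;
                 χ * Z ^ (p - 1), 0, ((p : ℝ) - 2) * Ω;
                 0, Ω, 0]) :
    (∀ v : ℝ × ℝ × ℝ, fderiv ℝ F (X, 0, Z) v =
      (-(χ * Z ^ (p - 1)) * v.2.1,
       χ * Z ^ (p - 1) * v.1 + ((p : ℝ) - 2) * Ω * v.2.2,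
       Ω * v.2.1)) ∧
    M ≠ Mᵀ := by
  subst hF hM
  refine ⟨fderiv_pTaTField_apply_of_saddle (by omega) hsaddle, ?_⟩
  have hrot : χ * Z ^ (p - 1) ≠ 0 := mul_ne_zero hχ.ne' (pow_ne_zero _ hZ)
  exact Matrix.ne_transpose_of_apply_ne (i := 0) (j := 1) (by simpa using neg_ne_self.mpr hrot)

/-- No-go theorem for local optimality of `p`TaT with `p > 2`: at any saddle fixed
point `(X,0,Z)` (on the unit sphere, `Z ≠ 0`, `χXZ^{p−2} = Ω`) the Jacobi matrix of
the `p`TaT flow equals the matrix `M` with rows `(0, −χZ^{p−1}, 0)`,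
`(χZ^{p−1}, 0, (p−2)Ω)`, `(0, Ω, 0)`, and `M` is not symmetric; hence (in the
paper's sense of local optimality, which requires a real symmetric Jacobi matrix at
the saddle) there is no value of the control parameter `Ω/χ > 0` for which `p`TaT
dynamics with `p > 2` is locally optimal. -/
theorem pTaT_no_local_optimality (p : ℕ) (hp : 3 ≤ p) (χ Ω : ℝ)
    (hχ : 0 < χ) (hΩ : 0 < Ω) (X Z : ℝ) (hZ : Z ≠ 0)
    (hsph : X ^ 2 + 0 ^ 2 + Z ^ 2 = 1)
    (hsaddle : χ * X * Z ^ (p - 2) = Ω)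
    (F : ℝ × ℝ × ℝ → ℝ × ℝ × ℝ)
    (hF : F = fun q => (-(χ * q.2.1 * q.2.2 ^ (p - 1)),
      χ * q.1 * q.2.2 ^ (p - 1) - Ω * q.2.2, Ω * q.2.1))
    (M : Matrix (Fin 3) (Fin 3) ℝ)
    (hM : M = !![0, -(χ * Z ^ (p - 1)), 0;
                 χ * Z ^ (p - 1), 0, ((p : ℝ) - 2) * Ω;
                 0, Ω, 0]) :
    (∀ v : ℝ × ℝ × ℝ, fderiv ℝ F (X, 0, Z) v =
      (-(χ * Z ^ (p - 1)) * v.2.1,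
       χ * Z ^ (p - 1) * v.1 + ((p : ℝ) - 2) * Ω * v.2.2,
       Ω * v.2.1)) ∧
    M ≠ Mᵀ :=
  pTaT_no_local_optimality_general p hp χ Ω hχ X Z hZ hsaddle F hF M hM
end

section
/- Let p ≥ 3 be an integer. The function h(Z) = Z^{2(p−2)}·((p−2) − (p−1)Z²), proportional to the square of the saddle-point Lyapunov exponent of the pTaT flow expressed through the saddle position Z, attains its unique maximum on the interval (0,1) at Z_LE = (p−2)/(p−1). Moreover, at this point the corresponding control parameter U(Z) = 1/(Z^{p−2}√(1−Z²)) takes the value U(Z_LE) = (p−1)^{p−1} / ( (p−2)^{p−2} · √((p−1)² − (p−2)²) ); i.e., the saddle-point Lyapunov exponent of the p-twisting-and-turning flow is maximal exactly when χ/Ω = (p−1)^{p−1} / ((p−2)^{p−2}√((p−1)² − (p−2)²)). -/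
/-!
With `n = p − 2`, the derivative of `h(Z) = Z^{2n}(n − (n+1)Z²)` factors as
`2 Z^{2n−1}(n² − (n+1)²Z²)`, which changes sign from positive to negative exactly once on
`Z > 0`, at `Z = n/(n+1)`; so `h` is strictly increasing before that point and strictly
decreasing after it.
-/

open Set

theorem lt_of_deriv_pos_left_of_deriv_neg_right {f : ℝ → ℝ} {a b x : ℝ} (hf : Continuous f)
    (hpos : ∀ y ∈ Ioo a b, 0 < deriv f y) (hneg : ∀ y ∈ Ioi b, deriv f y < 0)
    (hax : a ≤ x) (hxb : x ≠ b) : f x < f b := by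
  rcases hxb.lt_or_gt with hlt | hgt
  · have hmono : StrictMonoOn f (Icc a b) :=
      strictMonoOn_of_deriv_pos (convex_Icc a b) hf.continuousOn (by rwa [interior_Icc])
    exact hmono ⟨hax, hlt.le⟩ ⟨hax.trans hlt.le, le_rfl⟩ hlt
  · have hanti : StrictAntiOn f (Ici b) :=
      strictAntiOn_of_deriv_neg (convex_Ici b) hf.continuousOn (by rwa [interior_Ici])
    exact hanti (mem_Ici.2 le_rfl) hgt.le hgt

theorem one_div_div_pow_mul_sqrt_one_sub_sq (a : ℝ) {b : ℝ} (hb : 0 < b) (n : ℕ) :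
    1 / ((a / b) ^ n * √(1 - (a / b) ^ 2)) = b ^ (n + 1) / (a ^ n * √(b ^ 2 - a ^ 2)) := by
  have hsqrt : √(1 - (a / b) ^ 2) = √(b ^ 2 - a ^ 2) / b := by
    rw [show 1 - (a / b) ^ 2 = (b ^ 2 - a ^ 2) / b ^ 2 by field_simp,
      Real.sqrt_div' _ (sq_nonneg b), Real.sqrt_sq hb.le]
  rw [hsqrt, div_pow, div_mul_div_comm, ← pow_succ, one_div_div]

/-- `h(Z)` of the paper with `n = p − 2`. -/
noncomputable def lyapunovProfile (n : ℕ) (Z : ℝ) : ℝ :=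
  Z ^ (2 * n) * (n - (n + 1) * Z ^ 2)

namespace lyapunovProfile

variable {n : ℕ}

theorem continuous (n : ℕ) : Continuous (lyapunovProfile n) := by
  unfold lyapunovProfile
  fun_prop

theorem hasDerivAt (hn : 0 < n) (Z : ℝ) :
    HasDerivAt (lyapunovProfile n)
      (2 * Z ^ (2 * n - 1) * ((n : ℝ) ^ 2 - ((n : ℝ) + 1) ^ 2 * Z ^ 2)) Z := by
  have hprod := (hasDerivAt_pow (2 * n) Z).mul
    (((hasDerivAt_pow 2 Z).const_mul ((n : ℝ) + 1)).const_sub (n : ℝ))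
  refine hprod.congr_deriv ?_
  obtain ⟨k, hk⟩ : ∃ k, 2 * n = k + 1 := ⟨2 * n - 1, by omega⟩
  have hkn : (k : ℝ) + 1 = 2 * n := by exact_mod_cast hk.symm
  rw [hk, Nat.add_sub_cancel, pow_succ, Nat.cast_add_one, hkn]
  ring

theorem deriv_pos (hn : 0 < n) {Z : ℝ} (hZ : Z ∈ Ioo 0 ((n : ℝ) / (n + 1))) :
    0 < deriv (lyapunovProfile n) Z := by
  obtain ⟨hZ0, hZn⟩ := hZ
  rw [(hasDerivAt hn Z).deriv]
  have hlt : ((n : ℝ) + 1) * Z < n := by rwa [lt_div_iff₀' (by positivity)] at hZn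
  have hpos : 0 < ((n : ℝ) + 1) * Z := by positivity
  have : 0 < (n : ℝ) ^ 2 - ((n : ℝ) + 1) ^ 2 * Z ^ 2 := by nlinarith
  positivity

theorem deriv_neg (hn : 0 < n) {Z : ℝ} (hZ : Z ∈ Ioi ((n : ℝ) / (n + 1))) :
    deriv (lyapunovProfile n) Z < 0 := by
  rw [(hasDerivAt hn Z).deriv]
  have hlt : (n : ℝ) < (n + 1) * Z := by rwa [mem_Ioi, div_lt_iff₀' (by positivity)] at hZ
  have hZ0 : 0 < Z := lt_of_le_of_lt (by positivity) hZ
  have : (n : ℝ) ^ 2 - ((n : ℝ) + 1) ^ 2 * Z ^ 2 < 0 := by nlinarith [Nat.cast_nonneg (α := ℝ) n]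
  exact mul_neg_of_pos_of_neg (by positivity) this

theorem lt_of_ne (hn : 0 < n) {Z : ℝ} (hZ : 0 ≤ Z) (hne : Z ≠ n / (n + 1)) :
    lyapunovProfile n Z < lyapunovProfile n (n / (n + 1)) :=
  lt_of_deriv_pos_left_of_deriv_neg_right (continuous n) (fun _ => deriv_pos hn)
    (fun _ => deriv_neg hn) hZ hne

end lyapunovProfile

/-- The function `h(Z) = Z^{2(p−2)}((p−2) − (p−1)Z²)`, proportional to the squared
saddle-point Lyapunov exponent of the `p`TaT flow, attains its unique maximum on
`(0,1)` at `Z_LE = (p−2)/(p−1)`, where the control parameter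
`U(Z) = 1/(Z^{p−2}√(1−Z²))` equals `(p−1)^{p−1}/((p−2)^{p−2}√((p−1)² − (p−2)²))`. -/
theorem pTaT_max_lyapunov (p : ℕ) (hp : 3 ≤ p)
    (h : ℝ → ℝ)
    (hh : h = fun Z => Z ^ (2 * (p - 2)) * (((p : ℝ) - 2) - ((p : ℝ) - 1) * Z ^ 2))
    (ZLE : ℝ) (hZLE : ZLE = ((p : ℝ) - 2) / ((p : ℝ) - 1)) :
    ZLE ∈ Set.Ioo (0 : ℝ) 1 ∧
    (∀ Z ∈ Set.Ioo (0 : ℝ) 1, h Z ≤ h ZLE) ∧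
    (∀ Z ∈ Set.Ioo (0 : ℝ) 1, h Z = h ZLE → Z = ZLE) ∧
    1 / (ZLE ^ (p - 2) * Real.sqrt (1 - ZLE ^ 2)) =
      ((p : ℝ) - 1) ^ (p - 1) /
        (((p : ℝ) - 2) ^ (p - 2) *
          Real.sqrt (((p : ℝ) - 1) ^ 2 - ((p : ℝ) - 2) ^ 2)) := by
  set n := p - 2 with hn_def
  have hn : 0 < n := by omega
  have hp1 : p - 1 = n + 1 := by omega
  have hcast2 : (p : ℝ) - 2 = n := by rw [hn_def, Nat.cast_sub (by omega)]; norm_num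
  have hcast1 : (p : ℝ) - 1 = n + 1 := by linarith
  rw [hcast1, hcast2] at hh hZLE ⊢
  have hh' : h = lyapunovProfile n := hh
  subst hh' hZLE
  have hlt (Z : ℝ) (hZ : Z ∈ Ioo (0 : ℝ) 1) (hne : Z ≠ n / (n + 1)) :=
    lyapunovProfile.lt_of_ne hn hZ.1.le hne
  refine ⟨⟨by positivity, (div_lt_one (by positivity)).2 (by linarith)⟩, fun Z hZ => ?_,
    fun Z hZ heq => by_contra fun hne => (hlt Z hZ hne).ne heq, ?_⟩
  · rcases eq_or_ne Z (n / (n + 1)) with rfl | hne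
    exacts [le_rfl, (hlt Z hZ hne).le]
  · rw [hp1]
    exact one_div_div_pow_mul_sqrt_one_sub_sq _ (by positivity) n
end

section
/- For every integer p ≥ 3, the inequality 2p − 3 ≥ (p/(p−2))^{p−2} holds, with equality if and only if p = 3. Equivalently, the ground-state critical coupling of the p-twisting-and-turning model, (χ/Ω)_GS = (p−1)^{p−1}/√((p(p−2))^{p−2}), and the coupling maximizing the saddle-point Lyapunov exponent, (χ/Ω)_LE = (p−1)^{p−1}/((p−2)^{p−2}√((p−1)² − (p−2)²)), satisfy (χ/Ω)_GS ≥ (χ/Ω)_LE with equality if and only if p = 3; hence p = 3 is the only pTaT model with p > 2 in which the ground-state critical point coincides with the maximum of the saddle-point Lyapunov exponent, and thus the only one admitting a notion of critical coupling. -/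
private lemma pTaT_key_big (k : ℕ) (hk : 4 ≤ k) :
    ((k:ℝ)+2)^k < (2*(k:ℝ)+1)*(k:ℝ)^k := by
  have hk0 : (0:ℝ) < k := by
    have : (0:ℕ) < k := by omega
    exact_mod_cast this
  have h1 : (1 + 2/(k:ℝ)) ≤ Real.exp (2/(k:ℝ)) := by
    have := Real.add_one_le_exp (2/(k:ℝ)); linarith
  have h2 : (1 + 2/(k:ℝ))^k ≤ Real.exp (2/(k:ℝ))^k :=
    pow_le_pow_left₀ (by positivity) h1 k
  have h3 : Real.exp (2/(k:ℝ))^k = Real.exp 2 := by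
    rw [← Real.exp_nat_mul]
    congr 1
    field_simp
  have h4 : Real.exp 2 < 9 := by
    have he : Real.exp 2 = Real.exp 1 * Real.exp 1 := by
      rw [← Real.exp_add]; norm_num
    have h := Real.exp_one_lt_d9
    nlinarith [Real.exp_pos 1]
  have h5 : ((k:ℝ)+2)^k = (k:ℝ)^k * (1+2/(k:ℝ))^k := by
    rw [← mul_pow]
    congr 1
    field_simp
  have h6 : (9:ℝ) ≤ 2*(k:ℝ)+1 := by
    have : (4:ℝ) ≤ k := by exact_mod_cast hk
    linarith
  have hpow : (0:ℝ) < (k:ℝ)^k := pow_pos hk0 k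
  calc ((k:ℝ)+2)^k = (k:ℝ)^k * (1+2/(k:ℝ))^k := h5
    _ ≤ (k:ℝ)^k * Real.exp 2 := by
        exact mul_le_mul_of_nonneg_left (h2.trans_eq h3) hpow.le
    _ < (k:ℝ)^k * 9 := by exact mul_lt_mul_of_pos_left h4 hpow
    _ ≤ (2*(k:ℝ)+1)*(k:ℝ)^k := by nlinarith

private lemma pTaT_key (k : ℕ) (hk : 2 ≤ k) :
    ((k:ℝ)+2)^k < (2*(k:ℝ)+1)*(k:ℝ)^k := by
  rcases (by omega : k = 2 ∨ k = 3 ∨ 4 ≤ k) with h | h | h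
  · subst h; norm_num
  · subst h; norm_num
  · exact pTaT_key_big k h

private lemma pTaT_core (k : ℕ) (hk : 1 ≤ k) :
    ((k:ℝ)+2)^k ≤ (2*(k:ℝ)+1)*(k:ℝ)^k ∧
    (((k:ℝ)+2)^k = (2*(k:ℝ)+1)*(k:ℝ)^k ↔ k = 1) := by
  rcases (by omega : k = 1 ∨ 2 ≤ k) with h | h
  · subst h
    norm_num
  · refine ⟨(pTaT_key k h).le, ?_⟩
    constructor
    · intro heq
      exact absurd heq (pTaT_key k h).ne
    · intro h1; omega

/-- For every integer `p ≥ 3`, `(p/(p−2))^{p−2} ≤ 2p − 3`, with equality iff `p = 3`;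
equivalently, the ground-state critical coupling
`(χ/Ω)_GS = (p−1)^{p−1}/√((p(p−2))^{p−2})` and the coupling maximizing the
saddle-point Lyapunov exponent
`(χ/Ω)_LE = (p−1)^{p−1}/((p−2)^{p−2}√((p−1)² − (p−2)²))` satisfy
`(χ/Ω)_GS ≥ (χ/Ω)_LE`, with equality iff `p = 3`. -/
theorem pTaT_critical_coupling_only_p3 (p : ℕ) (hp : 3 ≤ p) :
    (((p : ℝ) / ((p : ℝ) - 2)) ^ (p - 2) ≤ 2 * (p : ℝ) - 3) ∧
    ((((p : ℝ) / ((p : ℝ) - 2)) ^ (p - 2) = 2 * (p : ℝ) - 3) ↔ p = 3) ∧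
    (((p : ℝ) - 1) ^ (p - 1) /
        (((p : ℝ) - 2) ^ (p - 2) *
          Real.sqrt (((p : ℝ) - 1) ^ 2 - ((p : ℝ) - 2) ^ 2)) ≤
      ((p : ℝ) - 1) ^ (p - 1) / Real.sqrt (((p : ℝ) * ((p : ℝ) - 2)) ^ (p - 2))) ∧
    ((((p : ℝ) - 1) ^ (p - 1) / Real.sqrt (((p : ℝ) * ((p : ℝ) - 2)) ^ (p - 2)) =
      ((p : ℝ) - 1) ^ (p - 1) /
        (((p : ℝ) - 2) ^ (p - 2) *
          Real.sqrt (((p : ℝ) - 1) ^ 2 - ((p : ℝ) - 2) ^ 2))) ↔ p = 3) := by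
  obtain ⟨k, rfl⟩ : ∃ k, p = k + 2 := ⟨p - 2, by omega⟩
  have hk : 1 ≤ k := by omega
  have hk0 : (0:ℝ) < k := by
    have : (0:ℕ) < k := hk
    exact_mod_cast this
  have hksub : (k + 2 : ℕ) - 2 = k := by omega
  have hksub1 : (k + 2 : ℕ) - 1 = k + 1 := by omega
  have hcast : ((k + 2 : ℕ) : ℝ) = (k:ℝ) + 2 := by push_cast; ring
  rw [hksub, hksub1, hcast]
  have h2 : ((k:ℝ) + 2) - 2 = (k:ℝ) := by ring
  have h1 : ((k:ℝ) + 2) - 1 = (k:ℝ) + 1 := by ring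
  have hsq : ((k:ℝ) + 1)^2 - (k:ℝ)^2 = 2*(k:ℝ)+1 := by ring
  rw [h2, h1, hsq]
  obtain ⟨hle, hiff⟩ := pTaT_core k hk
  have hkpow : (0:ℝ) < (k:ℝ)^k := pow_pos hk0 k
  have hA : (0:ℝ) < ((k:ℝ)+1)^(k+1) := pow_pos (by linarith) _
  have h2k1 : (0:ℝ) < 2*(k:ℝ)+1 := by linarith
  -- denominators
  have hD1eq : Real.sqrt ((((k:ℝ)+2) * (k:ℝ))^k) = Real.sqrt (((k:ℝ)+2)^k * (k:ℝ)^k) := by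
    rw [mul_pow]
  have hD2eq : (k:ℝ)^k * Real.sqrt (2*(k:ℝ)+1)
      = Real.sqrt ((2*(k:ℝ)+1) * (k:ℝ)^k * (k:ℝ)^k) := by
    rw [show (2*(k:ℝ)+1) * (k:ℝ)^k * (k:ℝ)^k = ((k:ℝ)^k)^2 * (2*(k:ℝ)+1) by ring,
      Real.sqrt_mul (sq_nonneg _), Real.sqrt_sq hkpow.le]
  have hD1pos : (0:ℝ) < Real.sqrt ((((k:ℝ)+2) * (k:ℝ))^k) := by
    apply Real.sqrt_pos.mpr
    positivity
  have hD2pos : (0:ℝ) < (k:ℝ)^k * Real.sqrt (2*(k:ℝ)+1) := by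
    apply mul_pos hkpow (Real.sqrt_pos.mpr h2k1)
  have hDle : Real.sqrt ((((k:ℝ)+2) * (k:ℝ))^k) ≤ (k:ℝ)^k * Real.sqrt (2*(k:ℝ)+1) := by
    rw [hD1eq, hD2eq]
    apply Real.sqrt_le_sqrt
    nlinarith
  refine ⟨?_, ?_, ?_, ?_⟩
  · rw [div_pow, div_le_iff₀ hkpow]
    calc ((k:ℝ)+2)^k ≤ (2*(k:ℝ)+1)*(k:ℝ)^k := hle
      _ = (2*((k:ℝ)+2) - 3) * (k:ℝ)^k := by ring
  · rw [div_pow, div_eq_iff hkpow.ne']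
    constructor
    · intro heq
      have : ((k:ℝ)+2)^k = (2*(k:ℝ)+1)*(k:ℝ)^k := by rw [heq]; ring
      have := hiff.mp this
      omega
    · intro hp3
      have hk1 : k = 1 := by omega
      subst hk1; norm_num
  · apply div_le_div_of_nonneg_left hA.le hD1pos hDle
  · constructor
    · intro heq
      by_contra hne
      have hk2 : 2 ≤ k := by omega
      have hstrict : ((k:ℝ)+2)^k < (2*(k:ℝ)+1)*(k:ℝ)^k := pTaT_key k hk2
      have hDlt : Real.sqrt ((((k:ℝ)+2) * (k:ℝ))^k) < (k:ℝ)^k * Real.sqrt (2*(k:ℝ)+1) := by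
        rw [hD1eq, hD2eq]
        apply Real.sqrt_lt_sqrt (by positivity)
        nlinarith
      have : ((k:ℝ)+1)^(k+1) / ((k:ℝ)^k * Real.sqrt (2*(k:ℝ)+1))
          < ((k:ℝ)+1)^(k+1) / Real.sqrt ((((k:ℝ)+2) * (k:ℝ))^k) :=
        div_lt_div_of_pos_left hA hD1pos hDlt
      rw [heq] at this
      exact lt_irrefl _ this
    · intro hp3
      have hk1 : k = 1 := by omega
      subst hk1
      norm_num
end

section
/- Define f(Z) = (1 − Z²) − (5 − 4Z³)²/27, the squared Y-coordinate of the separatrix of the 3-twisting-and-turning flow at critical coupling as a function of Z. Then f(1/2) = 0, f′(1/2) = 0, and f″(1/2) = 4/3. Consequently, the limit as Z → 1/2 (Z ≠ 1/2, within the region where f(Z) ≥ 0) of the quantity ((Z − 1/2)² − f(Z)) / ((Z − 1/2)² + f(Z)) — the cosine of the angle between the projections onto the y–z plane of the two separatrix branches (±√(f(Z)), Z − 1/2) at the saddle — equals 1/5. In particular, the separatrix branches of the 3TaT flow at critical coupling are not orthogonal at the saddle. -/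
/-! The separatrix function has a double root at the saddle height:
`f(Z) = (Z - 1/2)² r(Z)` with `r` a quartic and `r(1/2) = 2/3`. Hence `f''(1/2) = 2 r(1/2)`,
and the factor `(Z - 1/2)²` cancels from the cosine, which therefore tends to
`(1 - r(1/2)) / (1 + r(1/2)) = 1/5`. -/

open Filter Topology

section DoubleRoot

variable {r : ℝ → ℝ} {a : ℝ}

theorem hasDerivAt_sub_sq_mul {x : ℝ} (hr : DifferentiableAt ℝ r x) :
    HasDerivAt (fun x => (x - a) ^ 2 * r x) (2 * (x - a) * r x + (x - a) ^ 2 * deriv r x) x :=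
  ((((hasDerivAt_id' x).sub_const a).pow 2).mul hr.hasDerivAt).congr_deriv (by simp)

theorem deriv_sub_sq_mul (hr : DifferentiableAt ℝ r a) :
    deriv (fun x => (x - a) ^ 2 * r x) a = 0 := by
  simp [(hasDerivAt_sub_sq_mul hr).deriv]

theorem deriv_deriv_sub_sq_mul (hr : Differentiable ℝ r)
    (hr' : DifferentiableAt ℝ (deriv r) a) :
    deriv (deriv fun x => (x - a) ^ 2 * r x) a = 2 * r a := by
  have hderiv : deriv (fun x => (x - a) ^ 2 * r x)
      = fun x => 2 * (x - a) * r x + (x - a) ^ 2 * deriv r x :=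
    funext fun x => (hasDerivAt_sub_sq_mul (hr x)).deriv
  have h : HasDerivAt (deriv fun x => (x - a) ^ 2 * r x) (2 * r a) a := by
    rw [hderiv]
    exact (((((hasDerivAt_id' a).sub_const a).const_mul 2).mul (hr a).hasDerivAt).add
      (hasDerivAt_sub_sq_mul (a := a) hr')).congr_deriv (by simp)
  exact h.deriv

theorem tendsto_branch_cos (hr : ContinuousAt r a) (h : 1 + r a ≠ 0) :
    Tendsto (fun x => ((x - a) ^ 2 - (x - a) ^ 2 * r x) / ((x - a) ^ 2 + (x - a) ^ 2 * r x))
      (𝓝[≠] a) (𝓝 ((1 - r a) / (1 + r a))) := by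
  have hlim : Tendsto (fun x => (1 - r x) / (1 + r x)) (𝓝 a) (𝓝 ((1 - r a) / (1 + r a))) :=
    ((continuousAt_const.sub hr).div (continuousAt_const.add hr) h).tendsto
  refine (hlim.mono_left nhdsWithin_le_nhds).congr' ?_
  filter_upwards [self_mem_nhdsWithin] with x hx
  have hne : (x - a) ^ 2 ≠ 0 := pow_ne_zero _ (sub_ne_zero.mpr hx)
  rw [← mul_one_sub, ← mul_one_add, mul_div_mul_left _ _ hne]

end DoubleRoot

noncomputable def separatrixCofactor (Z : ℝ) : ℝ :=
  (8 + 32 * Z - 12 * Z ^ 2 - 16 * Z ^ 3 - 16 * Z ^ 4) / 27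

theorem separatrix_eq_sq_mul_cofactor (Z : ℝ) :
    (1 - Z ^ 2) - (5 - 4 * Z ^ 3) ^ 2 / 27 = (Z - 1 / 2) ^ 2 * separatrixCofactor Z := by
  unfold separatrixCofactor
  ring

theorem separatrixCofactor_half : separatrixCofactor (1 / 2) = 2 / 3 := by
  norm_num [separatrixCofactor]

theorem contDiff_separatrixCofactor : ContDiff ℝ 2 separatrixCofactor := by
  unfold separatrixCofactor
  fun_prop

/-- For `f(Z) = (1 − Z²) − (5 − 4Z³)²/27`, the squared Y-coordinate of the 3TaT
separatrix at critical coupling: `f(1/2) = 0`, `f′(1/2) = 0`, `f″(1/2) = 4/3`, and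
the cosine of the angle between the projected separatrix branches,
`((Z−1/2)² − f(Z))/((Z−1/2)² + f(Z))`, tends to `1/5` as `Z → 1/2` within
`{Z ≠ 1/2, f(Z) ≥ 0}`; in particular the branches are not orthogonal. -/
theorem threeTaT_branch_angle (f : ℝ → ℝ)
    (hf : f = fun Z => (1 - Z ^ 2) - (5 - 4 * Z ^ 3) ^ 2 / 27) :
    f (1 / 2) = 0 ∧ deriv f (1 / 2) = 0 ∧ deriv (deriv f) (1 / 2) = 4 / 3 ∧
    Filter.Tendsto
      (fun Z => ((Z - 1 / 2) ^ 2 - f Z) / ((Z - 1 / 2) ^ 2 + f Z))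
      (nhdsWithin (1 / 2) {Z : ℝ | Z ≠ 1 / 2 ∧ 0 ≤ f Z})
      (nhds (1 / 5)) := by
  obtain rfl : f = fun Z => (Z - 1 / 2) ^ 2 * separatrixCofactor Z := by
    simp only [hf, separatrix_eq_sq_mul_cofactor]
  have hr : Differentiable ℝ separatrixCofactor :=
    contDiff_separatrixCofactor.differentiable (by norm_num)
  refine ⟨by simp, deriv_sub_sq_mul (hr _), ?_, ?_⟩
  · rw [deriv_deriv_sub_sq_mul hr (contDiff_separatrixCofactor.differentiable_deriv_two _),
      separatrixCofactor_half]
    norm_num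
  · have hcos := tendsto_branch_cos (hr (1 / 2)).continuousAt
      (by norm_num [separatrixCofactor_half])
    rw [separatrixCofactor_half, show (1 - 2 / 3 : ℝ) / (1 + 2 / 3) = 1 / 5 by norm_num] at hcos
    exact hcos.mono_left (nhdsWithin_mono _ fun Z hZ => hZ.1)
end
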